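/- arXiv:2211.10428 — 2 statements merged into one kernel-verified Lean document; each statement's English description precedes it below -/
import Mathlib

section
/- Let W' ⊆ W be τ-perpendicular subcategories of mod Λ, and let X be a module in W'. If X is τ-rigid in W (i.e. Hom(X, τ_W X) = 0), then X is τ-rigid in W' (i.e. Hom(X, τ_{W'} X) = 0). -/
/- ## An abstract framework for τ-exceptional sequences (after Buan–Marsh)

`Λ` is a finite-dimensional basic algebra over a field; `mod Λ` is the category
of finite-dimensional left `Λ`-modules with Auslander–Reiten translate `τ`.

* `Mod` is the set of isomorphism classes of indecomposable objects of `mod Λ`;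
  an indecomposable object of `C(mod Λ) = mod Λ ⊕ mod Λ[1]` is modelled as a
  pair `(X, ε) : Mod × Bool`, with `(X, false)` the module `X` and `(X, true)`
  its shift `X[1]`.
* `Wide` is the set of wide subcategories of `mod Λ` (each determined by the
  indecomposable modules it contains); `top` is `mod Λ` itself.
* A basic object of `C(W)` is modelled as the finite set of its indecomposable
  direct summands; `srigid W U` says that `U` is a support τ-rigid object of
  `C(W)` (for a τ-perpendicular subcategory `W`).
* `J W U` is the τ-perpendicular subcategory `J_W(U)`, and `E W U`/`Finv W U`
  are the Buan–Marsh bijection `ℰ^W_U` and its inverse `F^W_U`.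
* `mutate k` is Adachi–Iyama–Reiten mutation of ordered support τ-tilting
  objects in the (0-based) position `k`.
The listed axioms record the standard facts about these notions used in the
paper (Auslander–Smalø, Jasso's reduction, DIRRT, Buan–Marsh, AIR mutation). -/

open scoped Classical

noncomputable section

structure TauFramework where
  /-- isomorphism classes of indecomposable finite-dimensional `Λ`-modules -/
  Mod : Type
  /-- wide subcategories of `mod Λ` -/
  Wide : Type
  /-- the module category `mod Λ` itself -/
  top : Wide
  /-- membership of an indecomposable module in a wide subcategory -/
  mem : Wide → Mod → Prop
  mem_top : ∀ X, mem top X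
  /-- a wide subcategory is determined by its indecomposable objects -/
  wide_ext : ∀ W W' : Wide, (∀ X, mem W X ↔ mem W' X) → W = W'
  /-- the rank of a wide subcategory: the number of isomorphism classes of its
  simple objects; for a τ-perpendicular subcategory `W ≃ mod Λ_W` this is the
  number of simple `Λ_W`-modules -/
  rk : Wide → ℕ
  /-- `homZero X Y` ↔ `Hom(X, Y) = 0` -/
  homZero : Mod → Mod → Prop
  /-- `gen Y Z` ↔ `Z ∈ Gen Y` (`Z` is a quotient of a finite direct sum of
  copies of `Y`) -/
  gen : Mod → Mod → Prop
  /-- `extZero X Z` ↔ `Ext¹(X, Z) = 0` -/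
  extZero : Mod → Mod → Prop
  /-- `homTauZero W X Y` ↔ `Hom(Y, τ_W X) = 0`, for `X, Y ∈ W` -/
  homTauZero : Wide → Mod → Mod → Prop
  /-- the Auslander–Smalø criterion:
  `Hom(Y, τ_W X) = 0 ↔ Ext¹(X, W ∩ Gen Y) = 0` -/
  homTauZero_iff : ∀ W X Y, mem W X → mem W Y →
    (homTauZero W X Y ↔ ∀ Z, mem W Z → gen Y Z → extZero X Z)
  /-- `rigid W X` ↔ `X` is τ-rigid in `W`, i.e. `Hom(X, τ_W X) = 0` -/
  rigid : Wide → Mod → Prop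
  rigid_iff_homTauZero : ∀ W X, mem W X → (rigid W X ↔ homTauZero W X X)
  /-- `proj W X` ↔ `X` is a projective object of `W` -/
  proj : Wide → Mod → Prop
  proj_rigid : ∀ W X, mem W X → proj W X → rigid W X
  /-- `srigid W U`: `U` is (the set of indecomposable summands of) a basic
  support τ-rigid object of `C(W)` -/
  srigid : Wide → Finset (Mod × Bool) → Prop
  srigid_mem : ∀ W U, srigid W U → ∀ x ∈ U, mem W x.1
  srigid_subset : ∀ W (U V : Finset (Mod × Bool)), U ⊆ V → srigid W V → srigid W U
  srigid_singleton_mod : ∀ W X, mem W X → (srigid W {(X, false)} ↔ rigid W X)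
  srigid_singleton_proj : ∀ W X, mem W X → (srigid W {(X, true)} ↔ proj W X)
  srigid_card_le : ∀ W U, srigid W U → U.card ≤ rk W
  /-- the τ-perpendicular subcategory `J_W(U)` of a support τ-rigid object `U`
  of `C(W)` -/
  J : Wide → Finset (Mod × Bool) → Wide
  /-- `J_W(X) = X^⊥ ∩ {}^⊥(τ_W X) ∩ W` for a τ-rigid module `X` of `W` -/
  mem_J_singleton : ∀ W X Y, mem W X → rigid W X →
    (mem (J W {(X, false)}) Y ↔ mem W Y ∧ homZero X Y ∧ homTauZero W X Y)
  J_le : ∀ W U X, mem (J W U) X → mem W X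
  /-- Jasso's reduction: `rk J_W(U) + rk U = rk W` -/
  rk_J : ∀ W U, srigid W U → rk (J W U) + U.card = rk W
  /-- `J(P[1]) = J(P)` for `P` projective -/
  J_shift : ∀ W X, proj W X → J W {(X, true)} = J W {(X, false)}
  /-- the Buan–Marsh bijection `ℰ^W_U` -/
  E : Wide → Finset (Mod × Bool) → Mod × Bool → Mod × Bool
  /-- the inverse `F^W_U` of `ℰ^W_U` -/
  Finv : Wide → Finset (Mod × Bool) → Mod × Bool → Mod × Bool
  E_srigid : ∀ W U x, srigid W (insert x U) → x ∉ U → srigid (J W U) {E W U x}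
  Finv_srigid : ∀ W U x, srigid (J W U) {x} →
    srigid W (insert (Finv W U x) U) ∧ Finv W U x ∉ U
  Finv_E : ∀ W U x, srigid W (insert x U) → x ∉ U → Finv W U (E W U x) = x
  E_Finv : ∀ W U x, srigid (J W U) {x} → E W U (Finv W U x) = x
  /-- `J_{J_W(u)}(ℰ^W_u(v)) = J_W(u ⊕ v)` -/
  J_J_E : ∀ W (u v : Mod × Bool), srigid W {u, v} → u ≠ v →
    J (J W {u}) {E W {u} v} = J W {u, v}
  /-- `ℰ^W_{u ⊕ v} = ℰ^{J_W(u)}_{ℰ^W_u(v)} ∘ ℰ^W_u` -/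
  E_E : ∀ W (u v x : Mod × Bool), srigid W (insert x {u, v}) →
    x ∉ ({u, v} : Finset (Mod × Bool)) →
    E (J W {u}) {E W {u} v} (E W {u} x) = E W {u, v} x
  /-- Adachi–Iyama–Reiten mutation of ordered support τ-tilting objects
  in the (0-based) position `k` -/
  mutate : ℕ → List (Mod × Bool) → List (Mod × Bool)
  /-- AIR: there is a unique indecomposable `T_k* ≇ T_k` such that replacing
  `T_k` by `T_k*` again gives a support τ-tilting object -/
  mutate_spec : ∀ (k : ℕ) (T : List (Mod × Bool)), k < T.length →
    T.Nodup → srigid top T.toFinset → T.length = rk top →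
    mutate k T ≠ T ∧ (∃ t', mutate k T = T.set k t') ∧
    (mutate k T).Nodup ∧ srigid top (mutate k T).toFinset ∧
    ∀ t', (T.set k t').Nodup → srigid top ((T.set k t').toFinset) →
      T.set k t' = T ∨ T.set k t' = mutate k T

namespace TauFramework

variable (F : TauFramework)

/-- `W` is a τ-perpendicular subcategory of `mod Λ`. -/
def IsTauPerp (W : F.Wide) : Prop :=
  W = F.top ∨ ∃ U, F.srigid F.top U ∧ W = F.J F.top U

/-- `x` is an admissible final term of a signed τ-exceptional sequence in `W`:
either a τ-rigid module of `W`, or `P[1]` with `P` projective in `W`. -/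
def SOk (W : F.Wide) (x : F.Mod × Bool) : Prop :=
  F.mem W x.1 ∧ (x.2 = false → F.rigid W x.1) ∧ (x.2 = true → F.proj W x.1)

/-- signed τ-exceptional sequences in `W`, recorded in *reverse* order (the
head of the list is the final term `X_r` of the sequence `(X_1, …, X_r)`). -/
def IsSignedSeqRev : F.Wide → List (F.Mod × Bool) → Prop
  | _, [] => True
  | W, x :: xs => F.SOk W x ∧ IsSignedSeqRev (F.J W {(x.1, false)}) xs

/-- `(X_1, …, X_r)` is a signed τ-exceptional sequence in `W`: `X_r` is either
a τ-rigid module of `W` or `P[1]` with `P` projective in `W`, and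
`(X_1, …, X_{r-1})` is a signed τ-exceptional sequence in `J_W(|X_r|)`. -/
def IsSignedSeq (W : F.Wide) (l : List (F.Mod × Bool)) : Prop :=
  F.IsSignedSeqRev W l.reverse

/-- a complete signed τ-exceptional sequence in `W` (length `rk W`). -/
def IsCompleteSignedSeq (W : F.Wide) (l : List (F.Mod × Bool)) : Prop :=
  F.IsSignedSeq W l ∧ l.length = F.rk W

/-- (unsigned) τ-exceptional sequences in `W`, in reverse order. -/
def IsSeqRev : F.Wide → List F.Mod → Prop
  | _, [] => True
  | W, x :: xs => F.mem W x ∧ F.rigid W x ∧ IsSeqRev (F.J W {(x, false)}) xs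

/-- `(X_1, …, X_r)` is a τ-exceptional sequence in `W`: `X_r` is a τ-rigid
module of `W` and `(X_1, …, X_{r-1})` is a τ-exceptional sequence in
`J_W(X_r)`. -/
def IsSeq (W : F.Wide) (l : List F.Mod) : Prop :=
  F.IsSeqRev W l.reverse

/-- a complete τ-exceptional sequence in `W` (length `rk W`). -/
def IsCompleteSeq (W : F.Wide) (l : List F.Mod) : Prop :=
  F.IsSeq W l ∧ l.length = F.rk W

/-- `(T_1, …, T_n)` is an ordered (basic) support τ-tilting object of `C(W)`. -/
def IsOrderedTauTilting (W : F.Wide) (l : List (F.Mod × Bool)) : Prop :=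
  l.Nodup ∧ F.srigid W l.toFinset ∧ l.length = F.rk W

/-- auxiliary, reverse-order version of the Buan–Marsh bijection `ψ`. -/
def psiRev : F.Wide → List (F.Mod × Bool) → List (F.Mod × Bool)
  | _, [] => []
  | W, t :: ts => t :: psiRev (F.J W {t}) (ts.map (F.E W {t}))
  termination_by _ l => l.length
  decreasing_by simp

/-- the Buan–Marsh bijection `ψ` from ordered support τ-tilting objects to
complete signed τ-exceptional sequences, determined by: if
`ψ(T_1, …, T_n) = (A_1, …, A_n)` then `A_n = T_n` and
`A_{n-j} = ℰ^{W_{n-j+1}}_{A_{n-j+1}} ⋯ ℰ^{W_{n-1}}_{A_{n-1}} ℰ_{A_n}(T_{n-j})`,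
where `W_{n-1} = J(A_n)` and `W_j = J_{W_{j+1}}(A_{j+1})`. -/
def psi (W : F.Wide) (l : List (F.Mod × Bool)) : List (F.Mod × Bool) :=
  (F.psiRev W l.reverse).reverse

/-- cut a wide subcategory down by successive `J`s along a (reversed) list. -/
def wideAfterRev : F.Wide → List (F.Mod × Bool) → F.Wide
  | W, [] => W
  | W, x :: xs => wideAfterRev (F.J W {x}) xs

/-- For a (signed) τ-exceptional sequence `(A_1, …, A_n)` with tail
`l₂ = (A_{j+1}, …, A_n)`, this is the τ-perpendicular subcategory `W_j`
(`W_{n-1} = J(A_n)`, `W_j = J_{W_{j+1}}(A_{j+1})`, `W_n = mod Λ`). -/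
def wideOfTail (l₂ : List (F.Mod × Bool)) : F.Wide :=
  F.wideAfterRev F.top l₂.reverse

/-- the operation `π̃_i` on complete signed τ-exceptional sequences, applied to
the decomposition `(A_1, …, A_{i-1}) ++ (A_i, A_{i+1}) ++ (A_{i+2}, …, A_n)`:
it replaces `(A_i, A_{i+1})` by `(ℰ^{(i)}(A_{i+1}), F^{(i)}(A_i))`, where
`F^{(i)} = F^{W_{i+1}}_{A_{i+1}}` and `ℰ^{(i)} = ℰ^{W_{i+1}}_{F^{(i)}(A_i)}`
(for `i = n-1`: `F^{(n-1)} = F_{A_n}`, `ℰ^{(n-1)} = ℰ_{F^{(n-1)}(A_{n-1})}`,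
which is the case `W_n = mod Λ` of the same formula). -/
def ptildeAt (l₁ : List (F.Mod × Bool)) (a b : F.Mod × Bool)
    (l₂ : List (F.Mod × Bool)) : List (F.Mod × Bool) :=
  l₁ ++ F.E (F.wideOfTail l₂) {F.Finv (F.wideOfTail l₂) {b} a} b ::
    F.Finv (F.wideOfTail l₂) {b} a :: l₂

/-- `ptildeFun k` is the operation `π̃_{k+1}`, acting on the entries in the
0-based positions `k` and `k+1` of a complete signed τ-exceptional sequence. -/
def ptildeFun : ℕ → List (F.Mod × Bool) → List (F.Mod × Bool)
  | 0, a :: b :: l₂ => F.ptildeAt [] a b l₂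
  | 0, l => l
  | k + 1, a :: l => a :: ptildeFun k l
  | _ + 1, [] => []

/-- the operation `s_1`: replace `A_1` by `A_1[1]` (resp. `A_1[-1]`) if `A_1`
is a module (resp. a shifted module). -/
def flipFirst : List (F.Mod × Bool) → List (F.Mod × Bool)
  | [] => []
  | x :: l => (x.1, !x.2) :: l

/-- `sFun k` is the operation `s_{k+1}`:
`s_{j} = π̃_{j-1} π̃_{j-2} ⋯ π̃_1 s_1 π̃_1 ⋯ π̃_{j-2} π̃_{j-1}` for `j > 1`. -/
def sFun : ℕ → List (F.Mod × Bool) → List (F.Mod × Bool)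
  | 0 => F.flipFirst
  | k + 1 => F.ptildeFun k ∘ sFun k ∘ F.ptildeFun k

end TauFramework

/-- Lemma `lem:inc` (a), Buan–Marsh.
Let `W' ⊆ W` be τ-perpendicular subcategories of `mod Λ`, and let `X` be a
module in `W'`.  If `X` is τ-rigid in `W` (i.e. `Hom(X, τ_W X) = 0`), then
`X` is τ-rigid in `W'` (i.e. `Hom(X, τ_{W'} X) = 0`). -/
theorem stmt_3 (F : TauFramework) (W W' : F.Wide)
    (hW : F.IsTauPerp W) (hW' : F.IsTauPerp W')
    (hsub : ∀ X, F.mem W' X → F.mem W X)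
    (X : F.Mod) (hX : F.mem W' X)
    (h : F.rigid W X) :
    F.rigid W' X := by
  have hXW := hsub X hX
  rw [F.rigid_iff_homTauZero W' X hX, F.homTauZero_iff W' X X hX hX]
  rw [F.rigid_iff_homTauZero W X hXW, F.homTauZero_iff W X X hXW hXW] at h
  exact fun Z hZ hg => h Z (hsub Z hZ) hg
end
end

section
/- Let (B, C) be an ordered τ-rigid object in C(mod Λ), i.e. B and C are indecomposable objects such that B ⊕ C is a support τ-rigid object. Then the composite bijections satisfy ℰ^{J(C)}_{ℰ_C(B)} ∘ ℰ_C = ℰ^{J(B)}_{ℰ_B(C)} ∘ ℰ_B. -/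
/- ## An abstract framework for τ-exceptional sequences (after Buan–Marsh)

`Λ` is a finite-dimensional basic algebra over a field; `mod Λ` is the category
of finite-dimensional left `Λ`-modules with Auslander–Reiten translate `τ`.

* `Mod` is the set of isomorphism classes of indecomposable objects of `mod Λ`;
  an indecomposable object of `C(mod Λ) = mod Λ ⊕ mod Λ[1]` is modelled as a
  pair `(X, ε) : Mod × Bool`, with `(X, false)` the module `X` and `(X, true)`
  its shift `X[1]`.
* `Wide` is the set of wide subcategories of `mod Λ` (each determined by the
  indecomposable modules it contains); `top` is `mod Λ` itself.
* A basic object of `C(W)` is modelled as the finite set of its indecomposable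
  direct summands; `srigid W U` says that `U` is a support τ-rigid object of
  `C(W)` (for a τ-perpendicular subcategory `W`).
* `J W U` is the τ-perpendicular subcategory `J_W(U)`, and `E W U`/`Finv W U`
  are the Buan–Marsh bijection `ℰ^W_U` and its inverse `F^W_U`.
* `mutate k` is Adachi–Iyama–Reiten mutation of ordered support τ-tilting
  objects in the (0-based) position `k`.
The listed axioms record the standard facts about these notions used in the
paper (Auslander–Smalø, Jasso's reduction, DIRRT, Buan–Marsh, AIR mutation). -/

open scoped Classical

noncomputable section

/-- Lemma `lem:commute`, Buan–Marsh.
Let `(B, C)` be an ordered τ-rigid object in `C(mod Λ)`: `B, C` are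
(distinct) indecomposable objects such that `B ⊕ C` is a support τ-rigid
object.  Then the composite bijections agree:
`ℰ^{J(C)}_{ℰ_C(B)} ∘ ℰ_C = ℰ^{J(B)}_{ℰ_B(C)} ∘ ℰ_B` (as maps on their common
domain, the indecomposables `x` with `x ⊕ B ⊕ C` support τ-rigid and `x` not
a summand of `B ⊕ C`). -/
theorem stmt_11 (F : TauFramework) (b c : F.Mod × Bool)
    (hne : b ≠ c) (hbc : F.srigid F.top {b, c})
    (x : F.Mod × Bool)
    (hx : F.srigid F.top (insert x {b, c}))
    (hxm : x ∉ ({b, c} : Finset (F.Mod × Bool))) :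
    F.E (F.J F.top {c}) {F.E F.top {c} b} (F.E F.top {c} x) =
      F.E (F.J F.top {b}) {F.E F.top {b} c} (F.E F.top {b} x) := by
  have h1 := F.E_E F.top c b x (by rwa [Finset.pair_comm]) (by rwa [Finset.pair_comm])
  have h2 := F.E_E F.top b c x hx hxm
  rw [h1, h2, Finset.pair_comm]
end
end
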